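/- arXiv:1608.04625 — 2 statements merged into one kernel-verified Lean document; each statement's English description precedes it below -/
import Mathlib

section
/- Let z_1, …, z_N be pairwise distinct complex numbers and let μ : 𝔤 → ℂ be any linear functional. Then the inhomogeneous quadratic Gaudin Hamiltonians pairwise commute: H_i^μ ∘ H_j^μ = H_j^μ ∘ H_i^μ as endomorphisms of V_1 ⊗ ⋯ ⊗ V_N, for all 1 ≤ i, j ≤ N. -/
open scoped TensorProduct

noncomputable section

variable {𝔤 : Type*} [LieRing 𝔤] [LieAlgebra ℂ 𝔤]
variable {N : ℕ} (V : Fin N → Type*) [∀ i, AddCommGroup (V i)] [∀ i, Module ℂ (V i)]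
  [∀ i, LieRingModule 𝔤 (V i)] [∀ i, LieModule ℂ 𝔤 (V i)]

/-- The endomorphism `x^{(i)}` of `V 1 ⊗ ⋯ ⊗ V N` acting as `x` in the `i`-th tensor
factor and as the identity in the other factors. -/
def opAt (i : Fin N) (x : 𝔤) : Module.End ℂ (⨂[ℂ] j, V j) :=
  PiTensorProduct.map
    (Function.update (fun j => (LinearMap.id : V j →ₗ[ℂ] V j)) i
      (LieModule.toEnd ℂ 𝔤 (V i) x))

/-- The inhomogeneous quadratic Gaudin Hamiltonian
`H_i^μ = ∑_{k ≠ i} (z i - z k)⁻¹ ∑_a x_a^{(i)} ∘ x_a^{(k)} + ∑_a μ(x_a) x_a^{(i)}`. -/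
def gaudinHmu {d : ℕ} (b : Fin d → 𝔤) (μ : Module.Dual ℂ 𝔤) (z : Fin N → ℂ) (i : Fin N) :
    Module.End ℂ (⨂[ℂ] j, V j) :=
  (∑ k ∈ Finset.univ.erase i, (z i - z k)⁻¹ •
    ∑ a, opAt V i (b a) * opAt V k (b a)) +
  ∑ a, μ (b a) • opAt V i (b a)

/-! Write `Ω_ik = ∑_a x_a^{(i)} x_a^{(k)}` and `y = ∑_a μ(x_a) x_a`, so that
`H_i = ∑_k (z_i - z_k)⁻¹ Ω_ik + y^{(i)}`. Invariance and symmetry of the Killing form make the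
Casimir tensor `∑_a x_a ⊗ x_a` ad-invariant, hence `Ω_ik` commutes with `y^{(i)} + y^{(k)}`; since
operators at different sites commute, this yields the classical Yang–Baxter relation
`[Ω_ij, Ω_ik + Ω_jk] = 0`. In `[H_i, H_j]` the terms linear in `y` add up to
`(z_i - z_j)⁻¹ [Ω_ij, y^{(i)} + y^{(j)}] = 0`, and the quadratic terms group, for each third site
`m`, into a multiple of `[Ω_im, Ω_ij]` whose coefficient vanishes by the partial-fraction identity
`1/((z_i - z_m)(z_j - z_m)) = 1/((z_i - z_j)(z_j - z_m)) + 1/((z_i - z_m)(z_j - z_i))`. -/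

attribute [local instance] LieRing.ofAssociativeRing

section Casimir

open LieModule TensorProduct

variable {R L M ι : Type*} [CommRing R] [LieRing L] [LieAlgebra R L]
  [AddCommGroup M] [Module R M] [LieRingModule L M] [LieModule R L M]
  [Fintype ι] [DecidableEq ι] {b : Module.Basis ι R L}

lemma traceForm_lie_swap (u v y : L) :
    traceForm R L M ⁅u, y⁆ v = -traceForm R L M ⁅v, y⁆ u := by
  rw [traceForm_apply_lie_apply, ← lie_skew, map_neg, traceForm_comm]

lemma sum_traceForm_smul_eq
    (horth : ∀ a a', traceForm R L M (b a) (b a') = if a = a' then 1 else 0) (x : L) :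
    ∑ c, traceForm R L M x (b c) • b c = x := by
  have hcoord : ∀ c, (traceForm R L M).flip (b c) = b.coord c := fun c =>
    b.ext fun a => by simp [horth, Finsupp.single_apply, eq_comm]
  have hrepr : ∀ c, traceForm R L M x (b c) = b.repr x c := fun c =>
    LinearMap.congr_fun (hcoord c) x
  simp_rw [hrepr]
  exact b.sum_repr x

lemma sum_lie_tmul_add_tmul_lie_eq_zero
    (horth : ∀ a a', traceForm R L M (b a) (b a') = if a = a' then 1 else 0) (y : L) :
    ∑ a, (⁅b a, y⁆ ⊗ₜ[R] b a + b a ⊗ₜ[R] ⁅b a, y⁆) = 0 := by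
  have expand : ∀ a, ⁅b a, y⁆ = ∑ c, traceForm R L M ⁅b a, y⁆ (b c) • b c := fun a =>
    (sum_traceForm_smul_eq horth _).symm
  have hswap : ∑ a, b a ⊗ₜ[R] ⁅b a, y⁆ = -∑ a, ⁅b a, y⁆ ⊗ₜ[R] b a :=
    calc ∑ a, b a ⊗ₜ[R] ⁅b a, y⁆
        = ∑ a, ∑ c, traceForm R L M ⁅b a, y⁆ (b c) • b a ⊗ₜ[R] b c :=
          Finset.sum_congr rfl fun a _ => by
            conv_lhs => rw [expand a]
            simp_rw [tmul_sum, tmul_smul]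
      _ = ∑ c, -∑ a, traceForm R L M ⁅b c, y⁆ (b a) • b a ⊗ₜ[R] b c := by
          rw [Finset.sum_comm]
          refine Finset.sum_congr rfl fun c _ => ?_
          rw [← Finset.sum_neg_distrib]
          refine Finset.sum_congr rfl fun a _ => ?_
          rw [traceForm_lie_swap (b a) (b c) y, neg_smul]
      _ = -∑ a, ⁅b a, y⁆ ⊗ₜ[R] b a := by
          rw [Finset.sum_neg_distrib]
          refine congrArg Neg.neg (Finset.sum_congr rfl fun c _ => ?_)
          conv_rhs => rw [expand c]
          simp_rw [sum_tmul, smul_tmul']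
  rw [Finset.sum_add_distrib, hswap, add_neg_cancel]

lemma lie_mul_add_of_commute {A : Type*} [Ring A] {a b c d : A} (hbc : Commute b c)
    (had : Commute a d) : ⁅a * b, c + d⁆ = ⁅a, c⁆ * b + a * ⁅b, d⁆ := by
  have h1 : a * b * c = a * c * b := by rw [mul_assoc, hbc.eq, ← mul_assoc]
  have h2 : d * (a * b) = a * d * b := by rw [← mul_assoc, had.eq]
  simp only [Ring.lie_def, mul_add, add_mul, h1, h2]
  noncomm_ring

lemma commute_sum_mul_add_of_orthonormal {A : Type*} [Ring A] [Algebra R A]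
    (horth : ∀ a a', traceForm R L M (b a) (b a') = if a = a' then 1 else 0)
    (ρ σ : L →ₗ⁅R⁆ A) (hρσ : ∀ x y, Commute (ρ x) (σ y)) (y : L) :
    Commute (∑ a, ρ (b a) * σ (b a)) (ρ y + σ y) := by
  let φ := (LinearMap.mul R A).compl₁₂ ρ.toLinearMap σ.toLinearMap
  have hinv := congrArg (lift φ) (sum_lie_tmul_add_tmul_lie_eq_zero horth y)
  simp only [map_sum, map_add, lift.tmul, map_zero] at hinv
  rw [commute_iff_lie_eq, sum_lie]
  refine Eq.trans (Finset.sum_congr rfl fun a _ => ?_) hinv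
  rw [lie_mul_add_of_commute (hρσ _ _).symm (hρσ _ _), ← LieHom.map_lie, ← LieHom.map_lie]
  rfl

end Casimir

section GaudinAlgebra

variable {K A ι : Type*} [Field K] [Ring A] [Algebra K A] [Fintype ι]

-- The sum may run over all `k`: its term `k = i` vanishes since `(z i - z i)⁻¹ = 0⁻¹ = 0`.
def gaudinHamiltonian (Ω : ι → ι → A) (P : ι → A) (z : ι → K) (i : ι) : A :=
  ∑ k, (z i - z k)⁻¹ • Ω i k + P i

lemma inv_sub_mul_inv_sub {a b c : K} (hab : a ≠ b) (hac : a ≠ c) (hbc : b ≠ c) :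
    (a - c)⁻¹ * (b - c)⁻¹ = (a - b)⁻¹ * (b - c)⁻¹ + (a - c)⁻¹ * (b - a)⁻¹ := by
  have := sub_ne_zero.2 hab
  have := sub_ne_zero.2 hac
  have := sub_ne_zero.2 hbc
  have := sub_ne_zero.2 hab.symm
  field_simp
  ring

lemma sum_sum_eq_sum_row_add_col_add_diag {M : Type*} [AddCommMonoid M] {f : ι → ι → M}
    {i j : ι} (hi : ∀ l, f i l = 0) (hj : ∀ k, f k j = 0) (hji : f j i = 0)
    (hoff : ∀ k l, k ≠ i → k ≠ j → l ≠ i → l ≠ j → k ≠ l → f k l = 0) :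
    ∑ k, ∑ l, f k l = ∑ m, (f j m + f m i + f m m) := by
  classical
  have hsupp : ∀ k l, f k l = (if k = j then f j l else 0) + (if l = i then f k i else 0)
      + (if k = l then f k k else 0) := by
    intro k l
    rcases eq_or_ne k j with rfl | hkj
    · simp [hji, hj]
    rcases eq_or_ne l i with rfl | hli
    · rcases eq_or_ne k l with rfl | hkl
      · simp [hi, hkj]
      · simp [hkj, hkl]
    rcases eq_or_ne k l with rfl | hkl
    · simp [hkj, hli]
    simp only [hkj, hli, hkl, if_false, add_zero]
    rcases eq_or_ne k i with rfl | hki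
    · exact hi l
    rcases eq_or_ne l j with rfl | hlj
    · exact hj k
    exact hoff k l hki hkj hli hlj hkl
  calc ∑ k, ∑ l, f k l
      = ∑ k, ∑ l, ((if k = j then f j l else 0) + (if l = i then f k i else 0)
          + (if k = l then f k k else 0)) :=
        Finset.sum_congr rfl fun k _ => Finset.sum_congr rfl fun l _ => hsupp k l
    _ = ∑ m, (f j m + f m i + f m m) := by
        simp [Finset.sum_add_distrib, Finset.sum_ite_irrel]

variable {Ω : ι → ι → A} {P : ι → A} {z : ι → K}

lemma lie_sum_inv_sub_smul_of_ne (hΩP : ∀ i k l, l ≠ i → l ≠ k → Commute (Ω i k) (P l))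
    {i j : ι} (hij : i ≠ j) :
    ⁅∑ k, (z i - z k)⁻¹ • Ω i k, P j⁆ = (z i - z j)⁻¹ • ⁅Ω i j, P j⁆ := by
  rw [sum_lie, Finset.sum_eq_single j]
  · rw [smul_lie]
  · intro k _ hkj
    rcases eq_or_ne k i with rfl | hki
    · rw [sub_self, inv_zero, zero_smul, zero_lie]
    · rw [smul_lie, commute_iff_lie_eq.1 (hΩP i k j hij.symm hkj.symm), smul_zero]
  · simp

lemma lie_sum_inv_sub_smul_eq_zero (hz : Function.Injective z)
    (hsymm : ∀ i k, Ω i k = Ω k i)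
    (hΩΩ : ∀ i k l m, i ≠ l → i ≠ m → k ≠ l → k ≠ m → Commute (Ω i k) (Ω l m))
    (hYB : ∀ i j k, i ≠ j → i ≠ k → j ≠ k → Commute (Ω i j) (Ω i k + Ω j k))
    {i j : ι} (hij : i ≠ j) :
    ⁅∑ k, (z i - z k)⁻¹ • Ω i k, ∑ l, (z j - z l)⁻¹ • Ω j l⁆ = 0 := by
  set g : ι → ι → A := fun k l => ((z i - z k)⁻¹ * (z j - z l)⁻¹) • ⁅Ω i k, Ω j l⁆
  have hgi : ∀ l, g i l = 0 := fun l => by simp [g]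
  have hgj : ∀ k, g k j = 0 := fun k => by simp [g]
  have hgji : g j i = 0 := by simp [g, hsymm j i]
  -- Yang–Baxter turns all three brackets into `±⁅Ω i m, Ω i j⁆`; the coefficients then cancel
  -- by the partial-fraction identity.
  have htriple : ∀ m, g j m + g m i + g m m = 0 := by
    intro m
    rcases eq_or_ne m i with rfl | hmi
    · simp [hgji, hgi]
    rcases eq_or_ne m j with rfl | hmj
    · simp [hgji, hgj]
    have h1 := commute_iff_lie_eq.1 (hYB i j m hij hmi.symm hmj.symm)
    have h2 := commute_iff_lie_eq.1 (hYB i m j hmi.symm hij hmj)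
    rw [lie_add] at h1 h2
    have e1 : ⁅Ω i j, Ω j m⁆ = ⁅Ω i m, Ω i j⁆ := by
      rw [eq_neg_of_add_eq_zero_right h1, lie_skew]
    have e2 : ⁅Ω i m, Ω j m⁆ = -⁅Ω i m, Ω i j⁆ := by
      rw [hsymm j m, eq_neg_of_add_eq_zero_right h2]
    have hc := inv_sub_mul_inv_sub (hz.ne hij) (hz.ne hmi.symm) (hz.ne hmj.symm)
    simp only [g, hsymm j i, e1, e2]
    linear_combination (norm := module) (-hc) • ⁅Ω i m, Ω i j⁆
  calc ⁅∑ k, (z i - z k)⁻¹ • Ω i k, ∑ l, (z j - z l)⁻¹ • Ω j l⁆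
      = ∑ k, ∑ l, g k l := by
        rw [sum_lie_sum]
        refine Finset.sum_congr rfl fun k _ => Finset.sum_congr rfl fun l _ => ?_
        rw [smul_lie, lie_smul (z j - z l)⁻¹ (Ω i k), smul_smul]
    _ = ∑ m, (g j m + g m i + g m m) :=
        sum_sum_eq_sum_row_add_col_add_diag hgi hgj hgji fun k l hki hkj hli hlj hkl => by
          simp only [g, commute_iff_lie_eq.1 (hΩΩ i k j l hij hli.symm hkj hkl), smul_zero]
    _ = 0 := Finset.sum_eq_zero fun m _ => htriple m

theorem gaudinHamiltonian_commute (hz : Function.Injective z)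
    (hsymm : ∀ i k, Ω i k = Ω k i)
    (hΩΩ : ∀ i k l m, i ≠ l → i ≠ m → k ≠ l → k ≠ m → Commute (Ω i k) (Ω l m))
    (hYB : ∀ i j k, i ≠ j → i ≠ k → j ≠ k → Commute (Ω i j) (Ω i k + Ω j k))
    (hΩP : ∀ i k l, l ≠ i → l ≠ k → Commute (Ω i k) (P l))
    (hΩPP : ∀ i k, i ≠ k → Commute (Ω i k) (P i + P k))
    (hPP : ∀ i j, Commute (P i) (P j)) (i j : ι) :
    Commute (gaudinHamiltonian Ω P z i) (gaudinHamiltonian Ω P z j) := by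
  rcases eq_or_ne i j with rfl | hij
  · exact Commute.refl _
  have hPΩ : ⁅P i, ∑ k, (z j - z k)⁻¹ • Ω j k⁆ = (z i - z j)⁻¹ • ⁅Ω i j, P i⁆ := by
    rw [← lie_skew, lie_sum_inv_sub_smul_of_ne hΩP hij.symm, hsymm j i, ← neg_sub (z i),
      inv_neg, neg_smul, neg_neg]
  rw [commute_iff_lie_eq, gaudinHamiltonian, gaudinHamiltonian, add_lie, lie_add, lie_add,
    lie_sum_inv_sub_smul_eq_zero hz hsymm hΩΩ hYB hij, lie_sum_inv_sub_smul_of_ne hΩP hij, hPΩ,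
    commute_iff_lie_eq.1 (hPP i j), zero_add, add_zero, ← smul_add, ← lie_add, add_comm (P j),
    commute_iff_lie_eq.1 (hΩPP i j hij), smul_zero]

end GaudinAlgebra

namespace PiTensorProduct

variable {R ι : Type*} [CommSemiring R] [DecidableEq ι] {s : ι → Type*}
  [∀ i, AddCommMonoid (s i)] [∀ i, Module R (s i)]

def endAt (i : ι) : Module.End R (s i) →ₐ[R] Module.End R (⨂[R] j, s j) :=
  AlgHom.ofLinearMap ((mapMultilinear R s s).toLinearMap (fun _ => LinearMap.id) i)
    (by simp [Module.End.one_eq_id])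
    (fun f g => by
      simp only [MultilinearMap.toLinearMap_apply, mapMultilinear_apply,
        ← PiTensorProduct.map_mul]
      congr 1
      funext j
      rcases eq_or_ne j i with rfl | hj
      · simp
      · simp [Function.update_of_ne hj, Module.End.mul_eq_comp])

lemma endAt_apply (i : ι) (f : Module.End R (s i)) :
    endAt i f = map (Function.update (fun _ => LinearMap.id) i f) := rfl

lemma commute_endAt {i k : ι} (hik : i ≠ k) (f : Module.End R (s i)) (g : Module.End R (s k)) :
    Commute (endAt i f) (endAt k g) := by
  simp only [Commute, SemiconjBy, endAt_apply, ← PiTensorProduct.map_mul]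
  congr 1
  funext j
  rcases eq_or_ne j i with rfl | hji
  · simp [Function.update_of_ne hik, Module.End.mul_eq_comp]
  rcases eq_or_ne j k with rfl | hjk
  · simp [Function.update_of_ne hji, Module.End.mul_eq_comp]
  · simp [Function.update_of_ne hji, Function.update_of_ne hjk, Module.End.mul_eq_comp]

end PiTensorProduct

section Gaudin

open PiTensorProduct

variable {ι : Type*} [Fintype ι]

def opAtLieHom (i : Fin N) : 𝔤 →ₗ⁅ℂ⁆ Module.End ℂ (⨂[ℂ] j, V j) :=
  (endAt i).toLieHom.comp (LieModule.toEnd ℂ 𝔤 (V i))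

lemma opAtLieHom_apply (i : Fin N) (x : 𝔤) : opAtLieHom V i x = opAt V i x := rfl

lemma commute_opAt {i k : Fin N} (hik : i ≠ k) (x y : 𝔤) :
    Commute (opAt V i x) (opAt V k y) :=
  commute_endAt hik _ _

def splitCasimir (b : ι → 𝔤) (i k : Fin N) : Module.End ℂ (⨂[ℂ] j, V j) :=
  ∑ a, opAt V i (b a) * opAt V k (b a)

lemma splitCasimir_comm (b : ι → 𝔤) (i k : Fin N) :
    splitCasimir V b i k = splitCasimir V b k i := by
  rcases eq_or_ne i k with rfl | hik
  · rfl
  exact Finset.sum_congr rfl fun _ _ => (commute_opAt V hik _ _).eq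

lemma commute_splitCasimir_opAt (b : ι → 𝔤) {i k l : Fin N} (hi : l ≠ i) (hk : l ≠ k)
    (y : 𝔤) :
    Commute (splitCasimir V b i k) (opAt V l y) :=
  Commute.sum_left _ _ _ fun _ _ =>
    (commute_opAt V hi.symm _ _).mul_left (commute_opAt V hk.symm _ _)

lemma commute_splitCasimir_splitCasimir (b : ι → 𝔤) {i k l m : Fin N}
    (hil : i ≠ l) (him : i ≠ m) (hkl : k ≠ l) (hkm : k ≠ m) :
    Commute (splitCasimir V b i k) (splitCasimir V b l m) :=
  Commute.sum_right _ _ _ fun _ _ =>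
    (commute_splitCasimir_opAt V b hil.symm hkl.symm _).mul_right
      (commute_splitCasimir_opAt V b him.symm hkm.symm _)

variable [DecidableEq ι] {b : Module.Basis ι ℂ 𝔤}
  (horth : ∀ a a', killingForm ℂ 𝔤 (b a) (b a') = if a = a' then 1 else 0)
include horth

lemma commute_splitCasimir_opAt_add {i k : Fin N} (hik : i ≠ k) (y : 𝔤) :
    Commute (splitCasimir V b i k) (opAt V i y + opAt V k y) :=
  commute_sum_mul_add_of_orthonormal horth (opAtLieHom V i) (opAtLieHom V k)
    (commute_opAt V hik) y

lemma commute_splitCasimir_splitCasimir_add {i j k : Fin N} (hij : i ≠ j) (hik : i ≠ k)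
    (hjk : j ≠ k) :
    Commute (splitCasimir V b i j) (splitCasimir V b i k + splitCasimir V b j k) := by
  unfold splitCasimir
  rw [← Finset.sum_add_distrib]
  exact Commute.sum_right _ _ _ fun _ _ => by
    rw [← add_mul]
    exact (commute_splitCasimir_opAt_add V horth hij _).mul_right
      (commute_splitCasimir_opAt V b hik.symm hjk.symm _)

omit horth

lemma gaudinHmu_eq_gaudinHamiltonian {d : ℕ} (b : Fin d → 𝔤) (μ : Module.Dual ℂ 𝔤)
    (z : Fin N → ℂ) (i : Fin N) :
    gaudinHmu V b μ z i
      = gaudinHamiltonian (splitCasimir V b) (fun p => opAt V p (∑ a, μ (b a) • b a)) z i := by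
  rw [gaudinHmu, gaudinHamiltonian, ← opAtLieHom_apply, map_sum]
  simp_rw [map_smul, opAtLieHom_apply]
  congr 1
  exact Finset.sum_erase _ (by rw [sub_self, inv_zero, zero_smul])

end Gaudin

theorem inhomogeneous_gaudin_hamiltonians_commute
    {d : ℕ} (b : Module.Basis (Fin d) ℂ 𝔤)
    (horth : ∀ a a' : Fin d, killingForm ℂ 𝔤 (b a) (b a') = if a = a' then 1 else 0)
    (z : Fin N → ℂ) (hz : Function.Injective z) (μ : Module.Dual ℂ 𝔤) (i j : Fin N) :
    gaudinHmu V (⇑b) μ z i * gaudinHmu V (⇑b) μ z j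
      = gaudinHmu V (⇑b) μ z j * gaudinHmu V (⇑b) μ z i := by
  simp only [gaudinHmu_eq_gaudinHamiltonian]
  refine gaudinHamiltonian_commute hz (splitCasimir_comm V b) ?_ ?_ ?_ ?_ ?_ i j
  · exact fun _ _ _ _ => commute_splitCasimir_splitCasimir V b
  · exact fun _ _ _ => commute_splitCasimir_splitCasimir_add V horth
  · exact fun _ _ _ hi hk => commute_splitCasimir_opAt V b hi hk _
  · exact fun _ _ hik => commute_splitCasimir_opAt_add V horth hik _
  · intro p q
    rcases eq_or_ne p q with rfl | hpq
    exacts [Commute.refl _, commute_opAt V hpq _ _]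
end
end

section
/- Let z_1, …, z_N be pairwise distinct complex numbers and let μ : 𝔤 → ℂ be a linear functional. If x ∈ 𝔤 satisfies μ([x, y]) = 0 for all y ∈ 𝔤 (i.e. x lies in the centralizer of μ under the coadjoint action), then each inhomogeneous quadratic Gaudin Hamiltonian commutes with the diagonal action of x: Δ(x) ∘ H_i^μ = H_i^μ ∘ Δ(x) for all 1 ≤ i ≤ N, where Δ(x) = Σ_{j=1}^{N} x^{(j)}. -/
open scoped TensorProduct

noncomputable section

variable {𝔤 : Type*} [LieRing 𝔤] [LieAlgebra ℂ 𝔤]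
variable {N : ℕ} (V : Fin N → Type*) [∀ i, AddCommGroup (V i)] [∀ i, Module ℂ (V i)]
  [∀ i, LieRingModule 𝔤 (V i)] [∀ i, LieModule ℂ 𝔤 (V i)]

/-- The diagonal action `Δ(x) = ∑_j x^{(j)}`. -/
def diagAct (x : 𝔤) : Module.End ℂ (⨂[ℂ] j, V j) :=
  ∑ j, opAt V j x

/-! Bracketing with `Δ(x)` is a derivation, and `⁅Δ(x), y^{(i)}⁆ = ⁅x, y⁆^{(i)}` because factors
at different sites commute. So `⁅Δ(x), H_i^μ⁆` is assembled from the sums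
`∑_a (⁅x, x_a⁆^{(i)} x_a^{(k)} + x_a^{(i)} ⁅x, x_a⁆^{(k)})` and `(∑_a μ(x_a) ⁅x, x_a⁆)^{(i)}`.
Both vanish because the matrix of `ad x` in a basis orthonormal for the invariant Killing form is
antisymmetric; for the second sum, pair it with the bilinear map `(u, v) ↦ μ(v) u` and use
`μ ∘ ad x = 0`. -/

section OrthonormalBasis

variable {R L A ι : Type*} [CommRing R] [LieRing L] [LieAlgebra R L] [AddCommGroup A] [Module R A]
  [Fintype ι] [DecidableEq ι] {B : LinearMap.BilinForm R L} {b : Module.Basis ι R L}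

theorem repr_eq_apply_left_of_orthonormal
    (hb : ∀ a a', B (b a) (b a') = if a = a' then 1 else 0) (v : L) (a : ι) :
    b.repr v a = B (b a) v := by
  conv_rhs => rw [← b.sum_repr v]
  simp only [map_sum, map_smul, hb, smul_eq_mul, mul_ite, mul_one, mul_zero, Finset.sum_ite_eq,
    Finset.mem_univ, if_true]

theorem repr_eq_apply_right_of_orthonormal
    (hb : ∀ a a', B (b a) (b a') = if a = a' then 1 else 0) (v : L) (a : ι) :
    b.repr v a = B v (b a) := by
  conv_rhs => rw [← b.sum_repr v]
  simp only [map_sum, map_smul, LinearMap.sum_apply, LinearMap.smul_apply, hb, smul_eq_mul,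
    mul_ite, mul_one, mul_zero, Finset.sum_ite_eq', Finset.mem_univ, if_true]

theorem repr_lie_basis_antisymm (hB : B.lieInvariant L)
    (hb : ∀ a a', B (b a) (b a') = if a = a' then 1 else 0) (x : L) (a a' : ι) :
    b.repr ⁅x, b a⁆ a' = -b.repr ⁅x, b a'⁆ a := by
  rw [repr_eq_apply_right_of_orthonormal hb, hB, repr_eq_apply_left_of_orthonormal hb]

theorem sum_lie_apply_add_apply_lie_eq_zero (hB : B.lieInvariant L)
    (hb : ∀ a a', B (b a) (b a') = if a = a' then 1 else 0) (β : L →ₗ[R] L →ₗ[R] A) (x : L) :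
    ∑ a, (β ⁅x, b a⁆ (b a) + β (b a) ⁅x, b a⁆) = 0 := by
  have expand (a : ι) : ⁅x, b a⁆ = ∑ a', b.repr ⁅x, b a⁆ a' • b a' := (b.sum_repr _).symm
  calc ∑ a, (β ⁅x, b a⁆ (b a) + β (b a) ⁅x, b a⁆)
      = ∑ a, ∑ a', (b.repr ⁅x, b a⁆ a' + b.repr ⁅x, b a'⁆ a) • β (b a') (b a) := by
        simp only [add_smul, Finset.sum_add_distrib]
        congr 1
        · refine Finset.sum_congr rfl fun a _ => ?_
          conv_lhs => rw [expand a]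
          simp only [map_sum, map_smul, LinearMap.sum_apply, LinearMap.smul_apply]
        · rw [Finset.sum_comm]
          refine Finset.sum_congr rfl fun a _ => ?_
          conv_lhs => rw [expand a]
          simp only [map_sum, map_smul]
    _ = 0 := Finset.sum_eq_zero fun a _ => Finset.sum_eq_zero fun a' _ => by
        rw [repr_lie_basis_antisymm hB hb x a a', neg_add_cancel, zero_smul]

theorem sum_smul_lie_eq_zero (hB : B.lieInvariant L)
    (hb : ∀ a a', B (b a) (b a') = if a = a' then 1 else 0) {μ : Module.Dual R L} {x : L}
    (hx : ∀ y, μ ⁅x, y⁆ = 0) :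
    ∑ a, μ (b a) • ⁅x, b a⁆ = 0 := by
  simpa [hx] using
    sum_lie_apply_add_apply_lie_eq_zero hB hb ((LinearMap.lsmul R L).flip.compl₂ μ) x

end OrthonormalBasis

theorem lie_mul_eq_lie_mul_add_mul_lie {A : Type*} [Ring A] (a b c : A) :
    ⁅a, b * c⁆ = ⁅a, b⁆ * c + b * ⁅a, c⁆ := by
  simp only [Ring.lie_def]
  noncomm_ring

section TensorFactors

attribute [local instance] LieRing.ofAssociativeRing

def embedAt (i : Fin N) : Module.End ℂ (V i) →ₐ[ℂ] Module.End ℂ (⨂[ℂ] j, V j) :=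
  AlgHom.ofLinearMap ((PiTensorProduct.mapMultilinear ℂ V V).toLinearMap 1 i)
    (show PiTensorProduct.map (Pi.mulSingle i 1) = 1 by
      rw [Pi.mulSingle_one]; exact PiTensorProduct.map_one)
    (fun f g => show PiTensorProduct.map (Pi.mulSingle i (f * g)) = _ by
      rw [Pi.mulSingle_mul]; exact PiTensorProduct.map_mul _ _)

theorem embedAt_apply (i : Fin N) (f : Module.End ℂ (V i)) :
    embedAt V i f = PiTensorProduct.map (Pi.mulSingle i f) := rfl

theorem commute_embedAt {i k : Fin N} (hik : i ≠ k) (f : Module.End ℂ (V i))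
    (g : Module.End ℂ (V k)) : Commute (embedAt V i f) (embedAt V k g) := by
  rw [embedAt_apply, embedAt_apply]
  exact (Pi.mulSingle_commute (f := fun j => Module.End ℂ (V j)) hik f g).map
    (PiTensorProduct.mapMonoidHom (R := ℂ) (s := V))

def opAtHom (i : Fin N) : 𝔤 →ₗ⁅ℂ⁆ Module.End ℂ (⨂[ℂ] j, V j) :=
  (embedAt V i).toLieHom.comp (LieModule.toEnd ℂ 𝔤 (V i))

theorem coe_opAtHom (i : Fin N) : ⇑(opAtHom V i : 𝔤 →ₗ⁅ℂ⁆ _) = opAt V i := rfl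

theorem lie_diagAct_opAt (x y : 𝔤) (i : Fin N) :
    ⁅diagAct V x, opAt V i y⁆ = opAt V i ⁅x, y⁆ := by
  rw [diagAct, sum_lie, Finset.sum_eq_single i]
  · rw [← coe_opAtHom, LieHom.map_lie]
  · intro j _ hji
    exact commute_iff_lie_eq.mp (commute_embedAt V hji _ _)
  · simp

theorem lie_diagAct_sum_opAt_mul_opAt {d : ℕ} (b : Module.Basis (Fin d) ℂ 𝔤)
    (hb : ∀ a a', killingForm ℂ 𝔤 (b a) (b a') = if a = a' then 1 else 0)
    (x : 𝔤) (i k : Fin N) :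
    ⁅diagAct V x, ∑ a, opAt V i (b a) * opAt V k (b a)⁆ = 0 := by
  simpa only [lie_sum, lie_mul_eq_lie_mul_add_mul_lie, lie_diagAct_opAt,
    LinearMap.compl₁₂_apply, LinearMap.mul_apply', LieHom.coe_toLinearMap, coe_opAtHom] using
    sum_lie_apply_add_apply_lie_eq_zero (LieModule.traceForm_lieInvariant ℂ 𝔤 𝔤) hb
      ((LinearMap.mul ℂ _).compl₁₂ (opAtHom V i).toLinearMap (opAtHom V k).toLinearMap) x

theorem lie_diagAct_sum_smul_opAt {d : ℕ} (b : Module.Basis (Fin d) ℂ 𝔤)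
    (hb : ∀ a a', killingForm ℂ 𝔤 (b a) (b a') = if a = a' then 1 else 0)
    {μ : Module.Dual ℂ 𝔤} {x : 𝔤} (hx : ∀ y, μ ⁅x, y⁆ = 0) (i : Fin N) :
    ⁅diagAct V x, ∑ a, μ (b a) • opAt V i (b a)⁆ = 0 := by
  have hdual : ∑ a, μ (b a) • opAt V i (b a) = opAt V i (∑ a, μ (b a) • b a) := by
    simp only [← coe_opAtHom, map_sum, map_smul]
  rw [hdual, lie_diagAct_opAt]
  simp only [lie_sum, lie_smul]
  rw [sum_smul_lie_eq_zero (LieModule.traceForm_lieInvariant ℂ 𝔤 𝔤) hb hx, ← coe_opAtHom,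
    map_zero]

end TensorFactors

theorem inhomogeneous_gaudin_commutes_with_centralizer
    {d : ℕ} (b : Module.Basis (Fin d) ℂ 𝔤)
    (horth : ∀ a a' : Fin d, killingForm ℂ 𝔤 (b a) (b a') = if a = a' then 1 else 0)
    (z : Fin N → ℂ) (μ : Module.Dual ℂ 𝔤)
    (x : 𝔤) (hx : ∀ y : 𝔤, μ ⁅x, y⁆ = 0) (i : Fin N) :
    diagAct V x * gaudinHmu V (⇑b) μ z i = gaudinHmu V (⇑b) μ z i * diagAct V x :=
  have hquad (k : Fin N) : Commute (diagAct V x) (∑ a, opAt V i (b a) * opAt V k (b a)) :=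
    commute_iff_lie_eq.mpr (lie_diagAct_sum_opAt_mul_opAt V b horth x i k)
  have hlin : Commute (diagAct V x) (∑ a, μ (b a) • opAt V i (b a)) :=
    commute_iff_lie_eq.mpr (lie_diagAct_sum_smul_opAt V b horth hx i)
  (Commute.sum_right _ _ _ fun k _ => (hquad k).smul_right _).add_right hlin

end
end
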